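/- Let V and V' be finite types, let F be a nonempty superset-closed family of finsets of V and F' a nonempty superset-closed family of finsets of V', and let φ be a graph isomorphism from the TAR graph of F to the TAR graph of F' such that |φ(S)| = |S| for every S ∈ F. Then φ maps every minimal member of F to a minimal member of F' of the same cardinality. -/

import Mathlib

variable {V : Type*} [Fintype V] [DecidableEq V]

/-- A family of finsets is superset-closed if it is closed under taking supersets. -/
def SupersetClosed (F : Finset (Finset V)) : Prop :=
  ∀ ⦃S T : Finset V⦄, S ∈ F → S ⊆ T → T ∈ F

/-- A minimal member of a family: a member no proper subset of which is a member. -/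
def IsMinimalMem (F : Finset (Finset V)) (M : Finset V) : Prop :=
  M ∈ F ∧ ∀ M' : Finset V, M' ⊂ M → M' ∉ F

/-- The TAR graph of a family of finsets: vertices are the members of the family,
two members being adjacent iff their symmetric difference has exactly one element. -/
def TARGraph (F : Finset (Finset V)) : SimpleGraph {S : Finset V // S ∈ F} where
  Adj S T := (symmDiff S.1 T.1).card = 1
  symm := ⟨fun S T (h : (symmDiff S.1 T.1).card = 1) => by show (symmDiff T.1 S.1).card = 1; rw [symmDiff_comm]; exact h⟩
  loopless := ⟨fun S (h : (symmDiff S.1 S.1).card = 1) => by simp [symmDiff_self] at h⟩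

instance (F : Finset (Finset V)) : DecidableRel (TARGraph F).Adj :=
  fun S T => inferInstanceAs (Decidable ((symmDiff S.1 T.1).card = 1))

namespace Finset

variable {α : Type*} [DecidableEq α]

theorem card_symmDiff (s t : Finset α) : #(symmDiff s t) = #(s \ t) + #(t \ s) := by
  rw [symmDiff_def, sup_eq_union, card_union_of_disjoint disjoint_sdiff_sdiff]

theorem ssubset_of_card_symmDiff_eq_one {s t : Finset α} (h : #(symmDiff s t) = 1)
    (hlt : #t < #s) : t ⊂ s := by
  rw [card_symmDiff] at h
  have hts : #(t \ s) < #(s \ t) := card_sdiff_lt_card_sdiff_iff.2 hlt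
  have hsub : t ⊆ s := sdiff_eq_empty_iff_subset.1 (card_eq_zero.1 (by omega))
  exact hsub.ssubset_of_ne (by rintro rfl; omega)

theorem symmDiff_erase_self {s : Finset α} {a : α} (ha : a ∈ s) :
    symmDiff s (s.erase a) = {a} := by
  rw [symmDiff_of_ge (erase_subset a s), sdiff_erase_self ha]

end Finset

section

variable {α : Type*} [DecidableEq α]

theorem SupersetClosed.exists_erase_mem_of_ssubset {F : Finset (Finset α)}
    (hF : SupersetClosed F) {S T : Finset α} (hT : T ∈ F) (hTS : T ⊂ S) :
    ∃ x ∈ S, S.erase x ∈ F := by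
  obtain ⟨x, hxS, hxT⟩ := Finset.exists_of_ssubset hTS
  exact ⟨x, hxS, hF hT (Finset.subset_erase.2 ⟨hTS.1, hxT⟩)⟩

namespace TARGraph

variable [Fintype α] {F : Finset (Finset α)}

theorem adj_erase {S : Finset α} (hS : S ∈ F) {x : α} (hx : x ∈ S) (hSx : S.erase x ∈ F) :
    (TARGraph F).Adj ⟨S, hS⟩ ⟨S.erase x, hSx⟩ := by
  show (symmDiff S (S.erase x)).card = 1
  rw [Finset.symmDiff_erase_self hx, Finset.card_singleton]

theorem ssubset_of_adj_of_card_lt {S T : {S : Finset α // S ∈ F}} (h : (TARGraph F).Adj S T)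
    (hlt : T.1.card < S.1.card) : T.1 ⊂ S.1 :=
  Finset.ssubset_of_card_symmDiff_eq_one h hlt

end TARGraph

end

theorem stmt11_general {V' : Type*} [Fintype V'] [DecidableEq V']
    (F : Finset (Finset V))
    (F' : Finset (Finset V')) (hsup' : SupersetClosed F')
    (φ : TARGraph F ≃g TARGraph F')
    (hcard : ∀ S : {S : Finset V // S ∈ F}, (φ S).1.card = S.1.card) :
    ∀ (M : Finset V) (hM : M ∈ F), IsMinimalMem F M →
      IsMinimalMem F' (φ ⟨M, hM⟩).1 ∧ (φ ⟨M, hM⟩).1.card = M.card := by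
  intro M hM hmin
  refine ⟨⟨(φ ⟨M, hM⟩).2, fun S' hS' hS'F => ?_⟩, hcard ⟨M, hM⟩⟩
  -- A proper subset of φ M in F' yields a neighbour φ M \ {x} in F'; pulling it back along φ
  -- gives a neighbour of M of smaller cardinality, i.e. a proper subset of M in F.
  obtain ⟨x, hx, hxF'⟩ := hsup'.exists_erase_mem_of_ssubset hS'F hS'
  set T := φ.symm ⟨_, hxF'⟩
  have hφT : φ T = ⟨_, hxF'⟩ := φ.apply_symm_apply _
  have hadj : (TARGraph F).Adj ⟨M, hM⟩ T := by
    rw [← φ.map_adj_iff, hφT]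
    exact TARGraph.adj_erase _ hx hxF'
  have hlt : T.1.card < M.card := by
    have hcardM : (φ ⟨M, hM⟩).1.card = M.card := hcard ⟨M, hM⟩
    rw [← hcard T, hφT, Finset.card_erase_of_mem hx, hcardM]
    have := Finset.card_pos.2 ⟨x, hx⟩
    omega
  exact hmin.2 T.1 (TARGraph.ssubset_of_adj_of_card_lt hadj hlt) T.2

theorem stmt11 {V' : Type*} [Fintype V'] [DecidableEq V']
    (F : Finset (Finset V)) (hne : F.Nonempty) (hsup : SupersetClosed F)
    (F' : Finset (Finset V')) (hne' : F'.Nonempty) (hsup' : SupersetClosed F')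
    (φ : TARGraph F ≃g TARGraph F')
    (hcard : ∀ S : {S : Finset V // S ∈ F}, (φ S).1.card = S.1.card) :
    ∀ (M : Finset V) (hM : M ∈ F), IsMinimalMem F M →
      IsMinimalMem F' (φ ⟨M, hM⟩).1 ∧ (φ ⟨M, hM⟩).1.card = M.card :=
  stmt11_general F F' hsup' φ hcard
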